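/- If v is an endomorphism of V with v ∘ v = 0, then ker(v + v*) = ker v ∩ ker v*, and V decomposes as the orthogonal direct sum V = (ker v ∩ ker v*) ⊕ im v ⊕ im v*; in particular v + v* restricts to an automorphism of the orthogonal complement of ker v ∩ ker v*. -/

import Mathlib

/-!
Since `ker v* = (im v)ᗮ` and `ker v = (im v*)ᗮ`, the orthogonal complement of
`ker v ∩ ker v*` is `im v + im v*`, which gives the spanning statement for every `v`.
When `v ∘ v = 0` we get `im v ⊆ ker v = (im v*)ᗮ`, so the two images are orthogonal; if
`v x + v* x = 0`, then `v x = -v* x` lies in both, hence vanishes, and so does `v* x`.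
Finally `v + v*` is self-adjoint, so it maps everything into `(ker (v + v*))ᗮ`, and it is
injective there, hence bijective by finite-dimensionality.
-/

open LinearMap Submodule

namespace LinearMap

variable {𝕜 E : Type*} [RCLike 𝕜] [NormedAddCommGroup E] [InnerProductSpace 𝕜 E]

theorem IsSymmetric.range_le_orthogonal_ker {T : E →ₗ[𝕜] E} (hT : T.IsSymmetric) :
    range T ≤ (ker T)ᗮ :=
  hT.orthogonal_range ▸ le_orthogonal_orthogonal _

variable [FiniteDimensional 𝕜 E]

theorem bijective_restrict_orthogonal_ker (T : E →ₗ[𝕜] E)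
    (hmap : ∀ x ∈ (ker T)ᗮ, T x ∈ (ker T)ᗮ) :
    Function.Bijective (T.restrict hmap) := by
  have hinj : Function.Injective (T.restrict hmap) := by
    rw [← ker_eq_bot, ker_restrict, eq_bot_iff]
    rintro ⟨x, hx⟩ hTx
    simpa using (orthogonal_disjoint (ker T)).le_bot ⟨hTx, hx⟩
  exact ⟨hinj, injective_iff_surjective.mp hinj⟩

theorem isSymmetric_add_adjoint (v : E →ₗ[𝕜] E) : (v + adjoint v).IsSymmetric :=
  (isSymmetric_iff_isSelfAdjoint _).mpr (star_eq_adjoint v ▸ IsSelfAdjoint.add_star_self v)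

theorem isOrtho_ker_inf_ker_adjoint_range (v : E →ₗ[𝕜] E) :
    ker v ⊓ ker (adjoint v) ⟂ range v := by
  rw [isOrtho_iff_le, orthogonal_range]
  exact inf_le_right

theorem isOrtho_ker_inf_ker_adjoint_range_adjoint (v : E →ₗ[𝕜] E) :
    ker v ⊓ ker (adjoint v) ⟂ range (adjoint v) := by
  rw [isOrtho_iff_le, orthogonal_range, adjoint_adjoint]
  exact inf_le_left

theorem orthogonal_ker_inf_ker_adjoint (v : E →ₗ[𝕜] E) :
    (ker v ⊓ ker (adjoint v))ᗮ = range v ⊔ range (adjoint v) := by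
  rw [← orthogonal_range, ← adjoint_adjoint v, ← orthogonal_range (adjoint v), adjoint_adjoint,
    inf_orthogonal, orthogonal_orthogonal, sup_comm]

theorem ker_inf_ker_adjoint_sup_range_sup_range_adjoint_eq_top (v : E →ₗ[𝕜] E) :
    ker v ⊓ ker (adjoint v) ⊔ range v ⊔ range (adjoint v) = ⊤ := by
  rw [sup_assoc, ← orthogonal_ker_inf_ker_adjoint, sup_orthogonal_of_hasOrthogonalProjection]

theorem isOrtho_range_range_adjoint_of_comp_self_eq_zero {v : E →ₗ[𝕜] E} (hv : v ∘ₗ v = 0) :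
    range v ⟂ range (adjoint v) := by
  rw [isOrtho_iff_le, orthogonal_range, adjoint_adjoint]
  exact range_le_ker_iff.mpr hv

theorem ker_add_adjoint_of_comp_self_eq_zero {v : E →ₗ[𝕜] E} (hv : v ∘ₗ v = 0) :
    ker (v + adjoint v) = ker v ⊓ ker (adjoint v) := by
  refine le_antisymm (fun x hx ↦ ?_) fun x ⟨hvx, hvx'⟩ ↦ by simp_all
  have hvx : v x = -adjoint v x := eq_neg_of_add_eq_zero_left hx
  have hvx₀ : v x = 0 :=
    disjoint_def.mp (isOrtho_range_range_adjoint_of_comp_self_eq_zero hv).disjoint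
      _ (mem_range_self v x) (hvx ▸ neg_mem (mem_range_self _ x))
  exact ⟨hvx₀, by simpa [hvx₀] using hvx⟩

end LinearMap

/-- If `v` is an endomorphism of a finite-dimensional complex inner product space with
`v ∘ v = 0`, then `ker(v + v*) = ker v ∩ ker v*`, the space decomposes as the orthogonal
direct sum `(ker v ∩ ker v*) ⊕ im v ⊕ im v*` (the three summands are pairwise orthogonal
and span everything), and `v + v*` restricts to an automorphism of the orthogonal
complement of `ker v ∩ ker v*`. -/
theorem hodge_decomposition_of_sq_zero (V : Type*) [NormedAddCommGroup V]
    [InnerProductSpace ℂ V] [FiniteDimensional ℂ V]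
    (v : V →ₗ[ℂ] V) (hv : v ∘ₗ v = 0) :
    LinearMap.ker (v + LinearMap.adjoint v)
        = LinearMap.ker v ⊓ LinearMap.ker (LinearMap.adjoint v) ∧
    (LinearMap.ker v ⊓ LinearMap.ker (LinearMap.adjoint v)) ⊔ LinearMap.range v ⊔
        LinearMap.range (LinearMap.adjoint v) = ⊤ ∧
    (∀ x ∈ LinearMap.ker v ⊓ LinearMap.ker (LinearMap.adjoint v),
        ∀ y ∈ LinearMap.range v, @inner ℂ V _ x y = 0) ∧
    (∀ x ∈ LinearMap.ker v ⊓ LinearMap.ker (LinearMap.adjoint v),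
        ∀ y ∈ LinearMap.range (LinearMap.adjoint v), @inner ℂ V _ x y = 0) ∧
    (∀ x ∈ LinearMap.range v, ∀ y ∈ LinearMap.range (LinearMap.adjoint v),
        @inner ℂ V _ x y = 0) ∧
    ∃ hmap : ∀ x ∈ (LinearMap.ker v ⊓ LinearMap.ker (LinearMap.adjoint v))ᗮ,
        (v + LinearMap.adjoint v) x ∈ (LinearMap.ker v ⊓ LinearMap.ker (LinearMap.adjoint v))ᗮ,
      Function.Bijective ((v + LinearMap.adjoint v).restrict hmap) := by
  have hker := ker_add_adjoint_of_comp_self_eq_zero hv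
  refine ⟨hker, ker_inf_ker_adjoint_sup_range_sup_range_adjoint_eq_top v,
    isOrtho_iff_inner_eq.mp (isOrtho_ker_inf_ker_adjoint_range v),
    isOrtho_iff_inner_eq.mp (isOrtho_ker_inf_ker_adjoint_range_adjoint v),
    isOrtho_iff_inner_eq.mp (isOrtho_range_range_adjoint_of_comp_self_eq_zero hv), ?_⟩
  rw [← hker]
  exact ⟨fun x _ ↦ (isSymmetric_add_adjoint v).range_le_orthogonal_ker (mem_range_self _ x),
    bijective_restrict_orthogonal_ker _ _⟩
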